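/- Let D_d(x,R₁) and D_d(y,R₂) be digital discs with x = (α,0), y = (γ,0), α < γ, γ − α ≤ R₁ + R₂, and R₁, R₂ ≥ 0. If C_d(x,R₁) ∩ C_d(y,R₂) ≠ ∅, then m(D_d(x,R₁), D_d(y,R₂)) = (R₁ − R₂)² + 2(R₁ + R₂ + 1)(γ − α) − (γ − α)². -/

import Mathlib

/-- L1 (taxicab) distance on the digital plane ℤ². -/
def dL1 (p q : ℤ × ℤ) : ℤ := |p.1 - q.1| + |p.2 - q.2|

/-- Digital circle with center `x` and radius `r`. -/
def digCircle (x : ℤ × ℤ) (r : ℤ) : Set (ℤ × ℤ) := {z | dL1 x z = r}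

/-- Digital disc with center `x` and radius `R`. -/
def digDisc (x : ℤ × ℤ) (R : ℤ) : Set (ℤ × ℤ) := {z | dL1 x z ≤ R}

/-- Jaccard-like metric: cardinality of the symmetric difference. -/
noncomputable def jm (A B : Set (ℤ × ℤ)) : ℕ := (symmDiff A B).ncard

/-!
An L1 disc of radius `R` is a diamond with `2 * (R - |b|) + 1` points in row `b`, hence
`2 * R ^ 2 + 2 * R + 1` points in all. Two diamonds centred on the same horizontal line meet in
the diamond spanned by the innermost of their left tips and the innermost of their right tips.
A common point of the two circles gives `|R₁ - R₂| ≤ γ - α ≤ R₁ + R₂` by the triangle inequality,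
and, since `|t| ≡ t (mod 2)`, that `R₁ + R₂ - (γ - α) = 2 * k` is even. So the tips are
`γ - R₂` and `α + R₁`, the intersection is the digital disc of radius `k`, and
`m(A, B) = |A| + |B| - 2 * |A ∩ B|` is a polynomial identity in `R₁`, `R₂`, `k`.
-/

lemma ncard_symmDiff_add_two_mul_ncard_inter {α : Type*} {s t : Set α} (hs : s.Finite)
    (ht : t.Finite) : (symmDiff s t).ncard + 2 * (s ∩ t).ncard = s.ncard + t.ncard := by
  rw [Set.symmDiff_def, Set.ncard_union_eq disjoint_sdiff_sdiff hs.sdiff ht.sdiff,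
    ← Set.ncard_inter_add_ncard_sdiff_eq_ncard s t hs,
    ← Set.ncard_inter_add_ncard_sdiff_eq_ncard t s ht, Set.inter_comm t s]
  ring

open Finset in
lemma sum_abs_Icc_neg_self {n : ℤ} (hn : 0 ≤ n) : ∑ b ∈ Icc (-n) n, |b| = n ^ 2 + n := by
  induction n, hn using Int.leInduction with
  | base => simp
  | succ n hn ih =>
    have hsplit : Icc (-(n + 1)) (n + 1) = insert (-(n + 1)) (insert (n + 1) (Icc (-n) n)) := by
      ext b; simp only [mem_Icc, mem_insert]; omega
    rw [hsplit, sum_insert (by simp only [mem_insert, mem_Icc]; omega),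
      sum_insert (by simp only [mem_Icc]; omega), ih, abs_neg, abs_of_nonneg (by omega)]
    ring

lemma dL1_comm (p q : ℤ × ℤ) : dL1 p q = dL1 q p := by
  simp only [dL1, abs_sub_comm]

lemma dL1_le_add (p q r : ℤ × ℤ) : dL1 p r ≤ dL1 p q + dL1 q r := by
  unfold dL1
  linarith [abs_sub_le p.1 q.1 r.1, abs_sub_le p.2 q.2 r.2]

lemma even_dL1_add_dL1_sub_dL1 (p q r : ℤ × ℤ) : Even (dL1 p q + dL1 q r - dL1 p r) := by
  simp only [dL1, Int.abs_eq_natAbs, Int.even_iff]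
  omega

section DigCircleInter

variable {x y z : ℤ × ℤ} {r s : ℤ}

lemma abs_sub_le_dL1_of_mem_digCircle_inter (hz : z ∈ digCircle x r ∩ digCircle y s) :
    |r - s| ≤ dL1 x y := by
  obtain ⟨hx, hy⟩ : dL1 x z = r ∧ dL1 y z = s := hz
  rw [abs_sub_le_iff]
  constructor
  · linarith [dL1_le_add x y z]
  · linarith [dL1_le_add y x z, dL1_comm x y]

lemma dL1_le_add_of_mem_digCircle_inter (hz : z ∈ digCircle x r ∩ digCircle y s) :
    dL1 x y ≤ r + s := by
  obtain ⟨hx, hy⟩ : dL1 x z = r ∧ dL1 y z = s := hz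
  linarith [dL1_le_add x z y, dL1_comm y z]

lemma even_add_sub_dL1_of_mem_digCircle_inter (hz : z ∈ digCircle x r ∩ digCircle y s) :
    Even (r + s - dL1 x y) := by
  obtain ⟨hx, hy⟩ : dL1 x z = r ∧ dL1 y z = s := hz
  rw [← hx, ← hy, dL1_comm y z]
  exact even_dL1_add_dL1_sub_dL1 x z y

end DigCircleInter

lemma digDisc_eq_image_add (x : ℤ × ℤ) (R : ℤ) : digDisc x R = (x + ·) '' digDisc 0 R := by
  ext z
  refine ⟨fun hz => ⟨z - x, ?_, add_sub_cancel x z⟩, ?_⟩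
  · simpa [digDisc, dL1, abs_sub_comm] using hz
  · rintro ⟨w, hw, rfl⟩
    simpa [digDisc, dL1, abs_sub_comm] using hw

open Finset in
lemma digDisc_zero_eq_filter (R : ℤ) :
    digDisc 0 R = ↑((Icc (-R) R ×ˢ Icc (-R) R).filter (fun z => |z.1| + |z.2| ≤ R)) := by
  ext z
  simp only [digDisc, dL1, Set.mem_ofPred_eq, coe_filter, mem_product, mem_Icc, Prod.fst_zero,
    Prod.snd_zero, zero_sub, abs_neg, Int.abs_eq_natAbs]
  omega

lemma finite_digDisc (x : ℤ × ℤ) (R : ℤ) : (digDisc x R).Finite := by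
  rw [digDisc_eq_image_add, digDisc_zero_eq_filter]
  exact (Finset.finite_toSet _).image _

open Finset in
lemma ncard_digDisc {R : ℤ} (x : ℤ × ℤ) (hR : 0 ≤ R) :
    ((digDisc x R).ncard : ℤ) = 2 * R ^ 2 + 2 * R + 1 := by
  have hrow : ∀ b ∈ Icc (-R) R,
      (((Icc (-R) R).filter (fun a => |a| + |b| ≤ R)).card : ℤ) = 2 * (R - |b|) + 1 := by
    intro b hb
    have hb' : |b| ≤ R := abs_le.mpr (mem_Icc.mp hb)
    rw [show (Icc (-R) R).filter (fun a => |a| + |b| ≤ R) = Icc (-(R - |b|)) (R - |b|) by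
      ext a; simp only [mem_Icc, mem_filter, Int.abs_eq_natAbs] at hb' ⊢; omega]
    rw [Int.card_Icc, Int.toNat_of_nonneg (by omega)]
    ring
  rw [digDisc_eq_image_add, Set.ncard_image_of_injective _ (add_right_injective x),
    digDisc_zero_eq_filter, Set.ncard_coe_finset, card_filter, sum_product_right]
  simp only [← card_filter]
  rw [Nat.cast_sum, sum_congr rfl hrow]
  simp only [mul_sub, sum_add_distrib, sum_sub_distrib, ← mul_sum, sum_const, Int.card_Icc,
    sum_abs_Icc_neg_self hR, nsmul_eq_mul]
  rw [Int.toNat_of_nonneg (by omega)]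
  ring

lemma digDisc_inter_digDisc {a b β R S c k : ℤ} (hright : c + k = min (a + R) (b + S))
    (hleft : c - k = max (a - R) (b - S)) :
    digDisc (a, β) R ∩ digDisc (b, β) S = digDisc (c, β) k := by
  ext z
  simp only [Set.mem_inter_iff, digDisc, Set.mem_ofPred_eq, dL1, Int.abs_eq_natAbs]
  omega

theorem jm_discs_collinear_general (α γ R₁ R₂ : ℤ) (hαγ : α < γ)
    (hcap : (digCircle (α, 0) R₁ ∩ digCircle (γ, 0) R₂).Nonempty) :
    (jm (digDisc (α, 0) R₁) (digDisc (γ, 0) R₂) : ℤ) =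
      (R₁ - R₂) ^ 2 + 2 * (R₁ + R₂ + 1) * (γ - α) - (γ - α) ^ 2 := by
  obtain ⟨z, hz⟩ := hcap
  have hdist : dL1 (α, 0) (γ, 0) = γ - α := by simp [dL1, abs_of_neg (sub_neg.mpr hαγ)]
  have hlow := abs_sub_le_dL1_of_mem_digCircle_inter hz
  have hhigh := dL1_le_add_of_mem_digCircle_inter hz
  obtain ⟨k, hk⟩ := even_add_sub_dL1_of_mem_digCircle_inter hz
  rw [hdist, abs_sub_le_iff] at hlow
  rw [hdist] at hhigh hk
  -- the horizontal extent of the lens is `[γ - R₂, α + R₁]`, of length `2 * k`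
  have hinter : digDisc (α, 0) R₁ ∩ digDisc (γ, 0) R₂ = digDisc (α + R₁ - k, 0) k :=
    digDisc_inter_digDisc (by omega) (by omega)
  have hcard := ncard_symmDiff_add_two_mul_ncard_inter (finite_digDisc (α, 0) R₁)
    (finite_digDisc (γ, 0) R₂)
  rw [hinter] at hcard
  have hcardℤ := congrArg (Nat.cast : ℕ → ℤ) hcard
  push_cast at hcardℤ
  rw [ncard_digDisc _ (by omega), ncard_digDisc _ (by omega), ncard_digDisc _ (by omega)] at hcardℤ
  rw [jm]
  have hγ : γ = α + R₁ + R₂ - 2 * k := by omega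
  subst hγ
  linear_combination hcardℤ

theorem jm_discs_collinear (α γ R₁ R₂ : ℤ) (hαγ : α < γ)
    (hR₁ : 0 ≤ R₁) (hR₂ : 0 ≤ R₂) (hhi : γ - α ≤ R₁ + R₂)
    (hcap : (digCircle (α, 0) R₁ ∩ digCircle (γ, 0) R₂).Nonempty) :
    (jm (digDisc (α, 0) R₁) (digDisc (γ, 0) R₂) : ℤ) =
      (R₁ - R₂) ^ 2 + 2 * (R₁ + R₂ + 1) * (γ - α) - (γ - α) ^ 2 :=
  jm_discs_collinear_general α γ R₁ R₂ hαγ hcap
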